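/- A net of quadrics Λ in the variables a,b,c,d,e is ρ3-unstable, where ρ3=(3,3,-2,-2,-2), if and only if at least one of the following holds: (a) Λ ⊆ (c,d,e) and Λ ∩ (c,d,e)² ≠ 0 (every element of the net vanishes on the line c=d=e=0 and some element is singular along this line); or (b) dim(Λ ∩ (c,d,e)²) ≥ 2 (a pencil of Λ is singular along the line c=d=e=0). -/

import Mathlib

open MvPolynomial

/-- The space of polynomials in the five variables `a,b,c,d,e` (indexed `0,…,4`). -/
abbrev Quin : Type := MvPolynomial (Fin 5) ℂ

/-- `m` is (the exponent vector of) a quadratic monomial. -/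
def QuadMon (m : Fin 5 →₀ ℕ) : Prop := (m.sum fun _ n => n) = 2

/-- A net of quadrics: a 3-dimensional space of quadratic forms. -/
def IsNet (Λ : Submodule ℂ Quin) : Prop :=
  Module.finrank ℂ Λ = 3 ∧ ∀ Q ∈ Λ, MvPolynomial.IsHomogeneous Q 2

/-- The `ρ`-weight of a monomial. -/
def wt (ρ : Fin 5 → ℤ) (m : Fin 5 →₀ ℕ) : ℤ := ∑ i, (m i : ℤ) * ρ i

/-- `Λ` is semistable with respect to the weight vector `ρ`: there are three distinct
quadratic monomials with total `ρ`-weight `≥ 0` such that the corresponding coefficient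
map `Λ → ℂ³` is bijective. -/
def SemistableWrt (Λ : Submodule ℂ Quin) (ρ : Fin 5 → ℤ) : Prop :=
  ∃ m1 m2 m3 : Fin 5 →₀ ℕ, m1 ≠ m2 ∧ m1 ≠ m3 ∧ m2 ≠ m3 ∧
    QuadMon m1 ∧ QuadMon m2 ∧ QuadMon m3 ∧
    0 ≤ wt ρ m1 + wt ρ m2 + wt ρ m3 ∧
    Function.Bijective (fun Q : Λ =>
      (![MvPolynomial.coeff m1 (Q : Quin), MvPolynomial.coeff m2 (Q : Quin),
         MvPolynomial.coeff m3 (Q : Quin)] : Fin 3 → ℂ))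

/-- The twelve distinguished weight vectors `ρ1,…,ρ12`. -/
def rho : Fin 12 → Fin 5 → ℤ :=
  ![![1,1,1,1,-4], ![2,2,2,-3,-3], ![3,3,-2,-2,-2], ![4,-1,-1,-1,-1],
    ![3,3,3,-2,-7], ![4,4,-1,-1,-6], ![9,4,-1,-6,-6], ![7,2,2,-3,-8],
    ![12,7,2,-8,-13], ![9,4,-1,-1,-11], ![14,4,-1,-6,-11], ![13,8,3,-7,-17]]

/-- A normalized weight vector: nonincreasing, sums to zero and not identically zero. -/
def IsNormalized (ρ : Fin 5 → ℤ) : Prop :=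
  (∀ i j : Fin 5, i ≤ j → ρ j ≤ ρ i) ∧ (∑ i, ρ i) = 0 ∧ ρ ≠ 0

/-- Linear substitution of variables by the matrix `g`, as a linear map on polynomials. -/
noncomputable def substMap (g : Matrix (Fin 5) (Fin 5) ℂ) : Quin →ₗ[ℂ] Quin :=
  (MvPolynomial.aeval fun i => ∑ j, MvPolynomial.C (g i j) * MvPolynomial.X j).toLinearMap

/-- Semistability of a net (Hilbert–Mumford criterion for `SL(5)`). -/
def Semistable (Λ : Submodule ℂ Quin) : Prop :=
  ∀ (g : Matrix.GeneralLinearGroup (Fin 5) ℂ) (ρ : Fin 5 → ℤ), IsNormalized ρ →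
    SemistableWrt (Submodule.map (substMap (g : Matrix (Fin 5) (Fin 5) ℂ)) Λ) ρ

/-- The symmetric matrix of a quadratic form. -/
noncomputable def quadMatrix (Q : Quin) : Matrix (Fin 5) (Fin 5) ℂ :=
  Matrix.of fun i j =>
    if i = j then MvPolynomial.coeff (Finsupp.single i 2) Q
    else (1/2) * MvPolynomial.coeff (Finsupp.single i 1 + Finsupp.single j 1) Q

/-- The discriminant quintic `det (x·A1 + y·A2 + z·A3)` of a net with basis `Q1,Q2,Q3`. -/
noncomputable def netDisc (Q1 Q2 Q3 : Quin) : MvPolynomial (Fin 3) ℂ :=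
  Matrix.det (Matrix.of fun i j : Fin 5 =>
    MvPolynomial.C (quadMatrix Q1 i j) * MvPolynomial.X 0 +
    MvPolynomial.C (quadMatrix Q2 i j) * MvPolynomial.X 1 +
    MvPolynomial.C (quadMatrix Q3 i j) * MvPolynomial.X 2)

/-- The net lies on a smooth quartic del Pezzo surface. -/
def OnSmoothDelPezzo (Λ : Submodule ℂ Quin) : Prop :=
  ∃ P1 P2 : Quin, P1 ∈ Λ ∧ P2 ∈ Λ ∧ LinearIndependent ℂ ![P1, P2] ∧
    ∀ v : Fin 5 → ℂ, v ≠ 0 → MvPolynomial.eval v P1 = 0 → MvPolynomial.eval v P2 = 0 →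
      LinearIndependent ℂ
        ![fun i => MvPolynomial.eval v (MvPolynomial.pderiv i P1),
          fun i => MvPolynomial.eval v (MvPolynomial.pderiv i P2)]

/-- The span of the quadratic monomials whose exponent vectors satisfy `P`. -/
noncomputable def monSpan (P : (Fin 5 →₀ ℕ) → Prop) : Submodule ℂ Quin :=
  Submodule.span ℂ {Q : Quin | ∃ m : Fin 5 →₀ ℕ, QuadMon m ∧ P m ∧ Q = MvPolynomial.monomial m 1}

/-- `(c,d,e)`: span of the quadratic monomials divisible by `c`, `d` or `e`. -/
noncomputable def idealCDE : Submodule ℂ Quin := monSpan fun m => m 2 ≠ 0 ∨ m 3 ≠ 0 ∨ m 4 ≠ 0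

/-- `(c,d,e)² = span{c², cd, ce, d², de, e²}`. -/
noncomputable def sqCDE : Submodule ℂ Quin := monSpan fun m => m 0 = 0 ∧ m 1 = 0

/-!
A quadratic monomial of degree `k` in `a, b` has `ρ₃`-weight `5k - 4`, so three monomials
qualify exactly when their degrees in `a, b` add up to at least `3`. Then at most one of them
lies in `(c,d,e)²`, and forms in `(c,d,e)²` have zero coefficient at the others. Under (b) some
nonzero form of the pencil also has zero coefficient at that one; under (a) no monomial of
degree `2` in `a, b` can be chosen, its coefficient vanishing on `Λ`, so none lies in `(c,d,e)²`.
Either way a nonzero form of `Λ` is killed by the coefficient map. Conversely, if neither holds,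
the monomials can be chosen greedily: each time, an element of `Λ` killed by the coefficients
chosen so far has a nonzero coefficient at a monomial of high enough degree in `a, b`, and the
resulting coefficient matrix is triangular with nonzero diagonal.
-/

open Module

section Coefficients

variable {σ R ι : Type*} [CommSemiring R] {Λ : Submodule R (MvPolynomial σ R)}

variable (Λ) in
noncomputable def coeffsMap (m : ι → σ →₀ ℕ) : Λ →ₗ[R] ι → R :=
  LinearMap.pi fun i => (lcoeff R (m i)).comp Λ.subtype

@[simp]
lemma coeffsMap_apply (m : ι → σ →₀ ℕ) (Q : Λ) (i : ι) :
    coeffsMap Λ m Q i = coeff (m i) (Q : MvPolynomial σ R) := rfl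

lemma eq_zero_of_forall_coeff_eq_zero {m : ι → σ →₀ ℕ} (h : Function.Injective (coeffsMap Λ m))
    {Q : MvPolynomial σ R} (hQ : Q ∈ Λ) (hcoeff : ∀ i, coeff (m i) Q = 0) : Q = 0 := by
  have : (⟨Q, hQ⟩ : Λ) = 0 := h (funext fun i => by simpa using hcoeff i)
  simpa using congrArg Subtype.val this

lemma exists_coeff_ne_zero_of_surjective [Nontrivial R] [DecidableEq ι] {m : ι → σ →₀ ℕ}
    (h : Function.Surjective (coeffsMap Λ m)) (i : ι) : ∃ Q ∈ Λ, coeff (m i) Q ≠ 0 := by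
  obtain ⟨Q, hQ⟩ := h (Pi.single i 1)
  have hi : coeff (m i) (Q : MvPolynomial σ R) = 1 := by simpa using congrFun hQ i
  exact ⟨Q, Q.2, by simp [hi]⟩

lemma injective_of_surjective_coeffsMap [Nontrivial R] {m : ι → σ →₀ ℕ}
    (h : Function.Surjective (coeffsMap Λ m)) : Function.Injective m := by
  classical
  intro i j hij
  by_contra hne
  obtain ⟨Q, hQ⟩ := h (Pi.single i 1)
  have hi : coeff (m i) (Q : MvPolynomial σ R) = 1 := by simpa using congrFun hQ i
  have hj : coeff (m j) (Q : MvPolynomial σ R) = 0 := by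
    simpa [Ne.symm hne] using congrFun hQ j
  rw [hij, hj] at hi
  exact zero_ne_one hi

end Coefficients

section FiniteDimensional

variable {σ K ι : Type*} [Field K] {Λ : Submodule K (MvPolynomial σ K)}

lemma exists_ne_zero_forall_coeff_eq_zero [Fintype ι] (m : ι → σ →₀ ℕ)
    (h : Fintype.card ι < finrank K Λ) : ∃ Q ∈ Λ, Q ≠ 0 ∧ ∀ i, coeff (m i) Q = 0 := by
  by_contra! H
  have hinj : Function.Injective (coeffsMap Λ m) := by
    refine (injective_iff_map_eq_zero _).2 fun Q hQ => Subtype.ext ?_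
    by_contra hQ0
    obtain ⟨i, hi⟩ := H Q Q.2 hQ0
    exact hi (congrFun hQ i)
  have := LinearMap.finrank_le_finrank_of_injective hinj
  simp only [finrank_fintype_fun_eq_card] at this
  omega

lemma bijective_coeffsMap_of_triangular [FiniteDimensional K Λ] {n : ℕ} (hΛ : finrank K Λ = n)
    (m : Fin n → σ →₀ ℕ) (x : Fin n → Λ)
    (hdiag : ∀ i, coeff (m i) (x i : MvPolynomial σ K) ≠ 0)
    (htri : ∀ i j, i < j → coeff (m i) (x j : MvPolynomial σ K) = 0) :
    Function.Bijective (coeffsMap Λ m) := by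
  have hrows : LinearIndependent K (coeffsMap Λ m ∘ x) := by
    let M : Matrix (Fin n) (Fin n) K := Matrix.of fun j i => coeffsMap Λ m (x j) i
    have hM : M.IsUpperTriangular := fun j i hij => htri i j hij
    have hdet : M.det ≠ 0 := by
      rw [Matrix.det_of_isUpperTriangular hM]
      exact Finset.prod_ne_zero_iff.2 fun i _ => hdiag i
    exact Matrix.linearIndependent_rows_of_det_ne_zero hdet
  have hsurj : Function.Surjective (coeffsMap Λ m) := by
    rw [← LinearMap.range_eq_top, eq_top_iff,
      ← hrows.span_eq_top_of_card_eq_finrank' (by simp), Submodule.span_le]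
    rintro _ ⟨j, rfl⟩
    exact ⟨x j, rfl⟩
  exact ⟨(LinearMap.injective_iff_surjective_of_finrank_eq_finrank (by simp [hΛ])).2 hsurj,
    hsurj⟩

end FiniteDimensional

lemma Submodule.eq_zero_of_mem_ker_of_finrank_le_one {K V : Type*} [Field K] [AddCommGroup V]
    [Module K V] {N : Submodule K V} [FiniteDimensional K N] (hN : finrank K N ≤ 1)
    (f : V →ₗ[K] K) {q y : V} (hq : q ∈ N) (hfq : f q ≠ 0) (hy : y ∈ N) (hfy : f y = 0) :
    y = 0 := by
  have hlt : N ⊓ LinearMap.ker f < N := inf_lt_left.2 fun hle => hfq (hle hq)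
  have hbot : N ⊓ LinearMap.ker f = ⊥ :=
    Submodule.finrank_eq_zero.1 (by have := Submodule.finrank_lt_finrank_of_lt hlt; omega)
  simpa [hbot] using (Submodule.mem_inf.2 ⟨hy, hfy⟩ : y ∈ N ⊓ LinearMap.ker f)

def abDeg (m : Fin 5 →₀ ℕ) : ℕ := m 0 + m 1

lemma QuadMon.sum_eq {m : Fin 5 →₀ ℕ} (h : QuadMon m) : m 0 + m 1 + m 2 + m 3 + m 4 = 2 := by
  rw [QuadMon, Finsupp.sum_fintype _ _ fun _ => rfl, Fin.sum_univ_five] at h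
  exact h

lemma QuadMon.abDeg_le {m : Fin 5 →₀ ℕ} (h : QuadMon m) : abDeg m ≤ 2 := by
  have := h.sum_eq
  unfold abDeg
  omega

lemma quadMon_of_coeff_ne_zero {Q : Quin} (hQ : Q.IsHomogeneous 2) {m : Fin 5 →₀ ℕ}
    (hm : coeff m Q ≠ 0) : QuadMon m := by
  simpa [QuadMon, Finsupp.weight_apply] using hQ hm

lemma wt_rho_two {m : Fin 5 →₀ ℕ} (h : QuadMon m) : wt (rho 2) m = 5 * abDeg m - 4 := by
  have := h.sum_eq
  simp only [wt, Fin.sum_univ_five, abDeg, rho, Matrix.cons_val, Matrix.cons_val_zero,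
    Matrix.cons_val_one, Nat.cast_add]
  omega

lemma sum_wt_rho_two_nonneg_iff {m : Fin 3 → Fin 5 →₀ ℕ} (hm : ∀ i, QuadMon (m i)) :
    0 ≤ ∑ i, wt (rho 2) (m i) ↔ 3 ≤ ∑ i, abDeg (m i) := by
  simp only [Fin.sum_univ_three, wt_rho_two (hm _)]
  omega

lemma coeff_eq_zero_of_mem_monSpan {P : (Fin 5 →₀ ℕ) → Prop} {Q : Quin} (hQ : Q ∈ monSpan P)
    {m : Fin 5 →₀ ℕ} (hm : ¬ P m) : coeff m Q = 0 := by
  suffices monSpan P ≤ LinearMap.ker (lcoeff ℂ m) from this hQ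
  refine Submodule.span_le.2 ?_
  rintro _ ⟨m', -, hm', rfl⟩
  have : m' ≠ m := by rintro rfl; exact hm hm'
  simp [coeff_monomial, this]

lemma mem_monSpan {P : (Fin 5 →₀ ℕ) → Prop} {Q : Quin} (hQ : Q.IsHomogeneous 2)
    (h : ∀ m, coeff m Q ≠ 0 → P m) : Q ∈ monSpan P := by
  rw [← Q.support_sum_monomial_coeff]
  refine Submodule.sum_mem _ fun m hm => ?_
  have hm := mem_support_iff.1 hm
  rw [← mul_one (coeff m Q), ← smul_eq_mul, ← smul_monomial]
  exact Submodule.smul_mem _ _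
    (Submodule.subset_span ⟨m, quadMon_of_coeff_ne_zero hQ hm, h m hm, rfl⟩)

lemma coeff_eq_zero_of_mem_sqCDE {q : Quin} (hq : q ∈ sqCDE) {m : Fin 5 →₀ ℕ}
    (hm : 0 < abDeg m) : coeff m q = 0 :=
  coeff_eq_zero_of_mem_monSpan hq fun ⟨h0, h1⟩ => by simp [abDeg, h0, h1] at hm

lemma coeff_eq_zero_of_mem_idealCDE {q : Quin} (hq : q ∈ idealCDE) {m : Fin 5 →₀ ℕ}
    (hm : QuadMon m) (h2 : abDeg m = 2) : coeff m q = 0 := by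
  have := hm.sum_eq
  unfold abDeg at h2
  exact coeff_eq_zero_of_mem_monSpan hq (by omega)

lemma exists_coeff_ne_zero_of_notMem_sqCDE {Q : Quin} (hQ : Q.IsHomogeneous 2)
    (h : Q ∉ sqCDE) : ∃ m, QuadMon m ∧ 0 < abDeg m ∧ coeff m Q ≠ 0 := by
  by_contra! H
  refine h (mem_monSpan hQ fun m hm => ?_)
  by_contra hP
  exact hm (H m (quadMon_of_coeff_ne_zero hQ hm) (by unfold abDeg; omega))

lemma exists_coeff_ne_zero_of_notMem_idealCDE {Q : Quin} (hQ : Q.IsHomogeneous 2)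
    (h : Q ∉ idealCDE) : ∃ m, QuadMon m ∧ abDeg m = 2 ∧ coeff m Q ≠ 0 := by
  by_contra! H
  refine h (mem_monSpan hQ fun m hm => ?_)
  have hqm := quadMon_of_coeff_ne_zero hQ hm
  have := hqm.sum_eq
  by_contra hP
  exact hm (H m hqm (by unfold abDeg; omega))

lemma semistableWrt_iff {Λ : Submodule ℂ Quin} {ρ : Fin 5 → ℤ} :
    SemistableWrt Λ ρ ↔ ∃ m : Fin 3 → Fin 5 →₀ ℕ,
      (∀ i, QuadMon (m i)) ∧ 0 ≤ ∑ i, wt ρ (m i) ∧ Function.Bijective (coeffsMap Λ m) := by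
  have hcoeffs (m : Fin 3 → Fin 5 →₀ ℕ) : ⇑(coeffsMap Λ m) =
      fun Q : Λ => ![coeff (m 0) (Q : Quin), coeff (m 1) (Q : Quin), coeff (m 2) (Q : Quin)] := by
    ext Q i
    fin_cases i <;> rfl
  constructor
  · rintro ⟨m₀, m₁, m₂, -, -, -, h₀, h₁, h₂, hw, hbij⟩
    refine ⟨![m₀, m₁, m₂], Fin.forall_fin_succ.2 ⟨h₀, Fin.forall_fin_two.2 ⟨h₁, h₂⟩⟩,
      by simpa [Fin.sum_univ_three, add_assoc] using hw, ?_⟩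
    rwa [hcoeffs]
  · rintro ⟨m, hm, hw, hbij⟩
    have hinj := injective_of_surjective_coeffsMap hbij.2
    refine ⟨m 0, m 1, m 2, hinj.ne (by decide), hinj.ne (by decide), hinj.ne (by decide),
      hm 0, hm 1, hm 2, by simpa [Fin.sum_univ_three] using hw, ?_⟩
    rwa [← hcoeffs]

lemma semistableWrt_rho_two_of_triangular {Λ : Submodule ℂ Quin} (h3 : finrank ℂ Λ = 3)
    {m₀ m₁ m₂ : Fin 5 →₀ ℕ} (hm₀ : QuadMon m₀) (hm₁ : QuadMon m₁) (hm₂ : QuadMon m₂)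
    (hdeg : 3 ≤ abDeg m₀ + abDeg m₁ + abDeg m₂) {x₀ x₁ x₂ : Quin}
    (hx₀ : x₀ ∈ Λ) (hx₁ : x₁ ∈ Λ) (hx₂ : x₂ ∈ Λ)
    (h₀₀ : coeff m₀ x₀ ≠ 0) (h₁₁ : coeff m₁ x₁ ≠ 0) (h₂₂ : coeff m₂ x₂ ≠ 0)
    (h₀₁ : coeff m₀ x₁ = 0) (h₀₂ : coeff m₀ x₂ = 0) (h₁₂ : coeff m₁ x₂ = 0) :
    SemistableWrt Λ (rho 2) := by
  have : FiniteDimensional ℂ Λ := Module.finite_of_finrank_eq_succ h3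
  have hm : ∀ i, QuadMon (![m₀, m₁, m₂] i) :=
    Fin.forall_fin_succ.2 ⟨hm₀, Fin.forall_fin_two.2 ⟨hm₁, hm₂⟩⟩
  refine semistableWrt_iff.2 ⟨![m₀, m₁, m₂], hm, ?_, ?_⟩
  · exact (sum_wt_rho_two_nonneg_iff hm).2 (by simpa [Fin.sum_univ_three] using hdeg)
  · refine bijective_coeffsMap_of_triangular h3 _ ![⟨x₀, hx₀⟩, ⟨x₁, hx₁⟩, ⟨x₂, hx₂⟩] ?_ ?_
    · intro i; fin_cases i <;> assumption
    · intro i j hij; fin_cases i <;> fin_cases j <;> first | assumption | simp at hij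

section Rho3

variable {Λ : Submodule ℂ Quin}

lemma semistableWrt_of_inf_sqCDE_eq_bot (hΛ : IsNet Λ) (hN : Λ ⊓ sqCDE = ⊥) :
    SemistableWrt Λ (rho 2) := by
  obtain ⟨h3, hhom⟩ := hΛ
  have hpos : ∀ Q ∈ Λ, Q ≠ 0 → ∃ m, QuadMon m ∧ 0 < abDeg m ∧ coeff m Q ≠ 0 := by
    refine fun Q hQ hQ0 => exists_coeff_ne_zero_of_notMem_sqCDE (hhom Q hQ) fun hsq => hQ0 ?_
    simpa [hN] using Submodule.mem_inf.2 ⟨hQ, hsq⟩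
  obtain ⟨x₀, hx₀, hx₀0⟩ :=
    Submodule.exists_mem_ne_zero_of_ne_bot (p := Λ) (by rintro rfl; simp at h3)
  obtain ⟨m₀, hm₀, hd₀, h₀₀⟩ := hpos x₀ hx₀ hx₀0
  obtain ⟨x₁, hx₁, hx₁0, h₁⟩ :=
    exists_ne_zero_forall_coeff_eq_zero (Λ := Λ) ![m₀] (by simp [h3])
  obtain ⟨m₁, hm₁, hd₁, h₁₁⟩ := hpos x₁ hx₁ hx₁0
  obtain ⟨x₂, hx₂, hx₂0, h₂⟩ :=
    exists_ne_zero_forall_coeff_eq_zero (Λ := Λ) ![m₀, m₁] (by simp [h3])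
  obtain ⟨m₂, hm₂, hd₂, h₂₂⟩ := hpos x₂ hx₂ hx₂0
  exact semistableWrt_rho_two_of_triangular h3 hm₀ hm₁ hm₂ (by omega) hx₀ hx₁ hx₂
    h₀₀ h₁₁ h₂₂ (h₁ 0) (h₂ 0) (h₂ 1)

lemma semistableWrt_of_not_le_idealCDE (hΛ : IsNet Λ) (hN : Λ ⊓ sqCDE ≠ ⊥)
    (hN₁ : finrank ℂ ↥(Λ ⊓ sqCDE) ≤ 1) (hI : ¬ Λ ≤ idealCDE) :
    SemistableWrt Λ (rho 2) := by
  obtain ⟨h3, hhom⟩ := hΛ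
  have : FiniteDimensional ℂ Λ := Module.finite_of_finrank_eq_succ h3
  obtain ⟨x₀, hx₀, hx₀I⟩ := SetLike.not_le_iff_exists.1 hI
  obtain ⟨m₀, hm₀, hd₀, h₀₀⟩ := exists_coeff_ne_zero_of_notMem_idealCDE (hhom x₀ hx₀) hx₀I
  obtain ⟨x₁, hx₁N, hx₁0⟩ := Submodule.exists_mem_ne_zero_of_ne_bot hN
  obtain ⟨hx₁, hx₁sq⟩ := Submodule.mem_inf.1 hx₁N
  obtain ⟨m₁, h₁₁⟩ := ne_zero_iff.1 hx₁0
  obtain ⟨x₂, hx₂, hx₂0, h₂⟩ :=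
    exists_ne_zero_forall_coeff_eq_zero (Λ := Λ) ![m₀, m₁] (by simp [h3])
  -- `x₂` cannot be a multiple of `x₁`, which spans the line `Λ ⊓ sqCDE`.
  have hx₂sq : x₂ ∉ sqCDE := fun hsq => hx₂0 <|
    Submodule.eq_zero_of_mem_ker_of_finrank_le_one hN₁ (lcoeff ℂ m₁) hx₁N h₁₁ ⟨hx₂, hsq⟩ (h₂ 1)
  obtain ⟨m₂, hm₂, hd₂, h₂₂⟩ := exists_coeff_ne_zero_of_notMem_sqCDE (hhom x₂ hx₂) hx₂sq
  exact semistableWrt_rho_two_of_triangular h3 hm₀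
    (quadMon_of_coeff_ne_zero (hhom x₁ hx₁) h₁₁) hm₂ (by omega) hx₀ hx₁ hx₂
    h₀₀ h₁₁ h₂₂ (coeff_eq_zero_of_mem_sqCDE hx₁sq (by omega)) (h₂ 0) (h₂ 1)

lemma not_semistableWrt_of_le_idealCDE (hI : Λ ≤ idealCDE) (hN : Λ ⊓ sqCDE ≠ ⊥) :
    ¬ SemistableWrt Λ (rho 2) := by
  intro hs
  obtain ⟨m, hm, hw, hbij⟩ := semistableWrt_iff.1 hs
  have hdeg := (sum_wt_rho_two_nonneg_iff hm).1 hw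
  by_cases h2 : ∃ i, abDeg (m i) = 2
  · obtain ⟨i, hi⟩ := h2
    obtain ⟨Q, hQ, hQi⟩ := exists_coeff_ne_zero_of_surjective hbij.2 i
    exact hQi (coeff_eq_zero_of_mem_idealCDE (hI hQ) (hm i) hi)
  · have hpos : ∀ i, 0 < abDeg (m i) := by
      have hle := fun i => (hm i).abDeg_le
      simp only [Fin.sum_univ_three] at hdeg
      simp only [not_exists, Fin.forall_fin_succ, Fin.succ_zero_eq_one, Fin.succ_one_eq_two,
        IsEmpty.forall_iff, and_true] at h2 hle ⊢
      omega
    obtain ⟨q, hqN, hq0⟩ := Submodule.exists_mem_ne_zero_of_ne_bot hN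
    exact hq0 (eq_zero_of_forall_coeff_eq_zero hbij.1 (Submodule.mem_inf.1 hqN).1
      fun i => coeff_eq_zero_of_mem_sqCDE (Submodule.mem_inf.1 hqN).2 (hpos i))

lemma not_semistableWrt_of_two_le_finrank (hN : 2 ≤ finrank ℂ ↥(Λ ⊓ sqCDE)) :
    ¬ SemistableWrt Λ (rho 2) := by
  intro hs
  obtain ⟨m, hm, hw, hbij⟩ := semistableWrt_iff.1 hs
  have hdeg := (sum_wt_rho_two_nonneg_iff hm).1 hw
  obtain ⟨k, hk⟩ : ∃ k, ∀ i ≠ k, 0 < abDeg (m i) := by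
    have hle := fun i => (hm i).abDeg_le
    simp only [Fin.sum_univ_three] at hdeg
    simp only [Fin.forall_fin_succ, Fin.exists_fin_succ, Fin.succ_zero_eq_one,
      Fin.succ_one_eq_two, IsEmpty.forall_iff, IsEmpty.exists_iff, and_true, or_false] at hle ⊢
    omega
  obtain ⟨q, hqN, hq0, hqk⟩ :=
    exists_ne_zero_forall_coeff_eq_zero (fun _ : Fin 1 => m k) (by rw [Fintype.card_fin]; exact hN)
  refine hq0 (eq_zero_of_forall_coeff_eq_zero hbij.1 (Submodule.mem_inf.1 hqN).1 fun i => ?_)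
  rcases eq_or_ne i k with rfl | hi
  · exact hqk 0
  · exact coeff_eq_zero_of_mem_sqCDE (Submodule.mem_inf.1 hqN).2 (hk i hi)

end Rho3

/-- Characterization of `ρ3`-unstable nets, `ρ3 = (3,3,-2,-2,-2)`:
either the net contains the line `c = d = e = 0` and an element of the net is singular
along it, or a pencil of the net is singular along this line. -/
theorem rho3_unstable_iff (Λ : Submodule ℂ Quin) (hΛ : IsNet Λ) :
    ¬ SemistableWrt Λ (rho 2) ↔
      ((Λ ≤ idealCDE ∧ Λ ⊓ sqCDE ≠ ⊥) ∨
        2 ≤ Module.finrank ℂ ↥(Λ ⊓ sqCDE)) := by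
  constructor
  · intro hns
    by_contra! ⟨hA, hB⟩
    rcases eq_or_ne (Λ ⊓ sqCDE) ⊥ with hN | hN
    · exact hns (semistableWrt_of_inf_sqCDE_eq_bot hΛ hN)
    · exact hns (semistableWrt_of_not_le_idealCDE hΛ hN (by omega) fun hI => hN (hA hI))
  · rintro (⟨hI, hN⟩ | hN)
    · exact not_semistableWrt_of_le_idealCDE hI hN
    · exact not_semistableWrt_of_two_le_finrank hN
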